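/- Let n ≥ 9, m = ⌊√n⌋, S = {i² : 0 ≤ i ≤ m} ∪ {2}, and P(x) = 2·(−1)^{n−m−1}·(m!²/n!)·∏_{i ∈ [n]∖S} (x − i). Then for every integer k with 1 ≤ k ≤ m, C(n, k²)·|P(k²)| ≤ 8/k². -/

import Mathlib

/-
Write `a = k²`. Since `a ∈ S ⊆ [n]`, the product of `|a - i|` over `[n] \ S` is the product over
`[n] \ {a}`, which is `a! (n - a)!`, divided by the product over `S \ {a}`. The latter is
`|a - 2|` times `∏_{j ≤ m, j ≠ k} |k - j| (k + j) = (m - k)! (m + k)! / 2`. Hence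
`C(n, a) |P(a)| = 4 m!² / ((m - k)! (m + k)! |a - 2|)`, and we conclude with
`m!² ≤ (m - k)! (m + k)!` (the central binomial coefficient is the largest) and `|a - 2| ≥ a / 2`.
-/

open Finset Nat

lemma prod_sdiff_mul_prod_erase {ι M : Type*} [CommMonoid M] [DecidableEq ι] {s t : Finset ι}
    {a : ι} (hts : t ⊆ s) (ha : a ∈ t) (f : ι → M) :
    (∏ i ∈ s \ t, f i) * ∏ i ∈ t.erase a, f i = ∏ i ∈ s.erase a, f i := by
  rw [← prod_sdiff (erase_subset_erase a hts), ← erase_sdiff_distrib,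
    erase_eq_of_notMem (notMem_sdiff_of_mem_right ha)]

lemma prod_erase_abs_natCast_sub (a n : ℕ) (h : a ≤ n) :
    ∏ i ∈ (range (n + 1)).erase a, |(a : ℝ) - i| = a ! * (n - a)! := by
  induction n, h using Nat.le_induction with
  | base =>
    have hdist : ∀ i ∈ range a, |(a : ℝ) - i| = ((a - i : ℕ) : ℝ) := fun i hi => by
      rw [Nat.cast_sub (mem_range.1 hi).le, abs_of_nonneg (by simpa using (mem_range.1 hi).le)]
    rw [range_add_one, erase_insert (by simp), prod_congr rfl hdist, ← Nat.cast_prod,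
      ← descFactorial_eq_prod_range, descFactorial_self, Nat.sub_self, factorial_zero,
      Nat.cast_one, mul_one]
  | succ n han ih =>
    rw [range_add_one, erase_insert_of_ne (by omega), prod_insert (by simp), ih,
      Nat.sub_add_comm han, factorial_succ, abs_sub_comm,
      abs_of_nonneg (by push_cast; linarith [(Nat.cast_le (α := ℝ)).2 han])]
    push_cast [Nat.cast_sub han]
    ring

lemma two_mul_factorial_mul_prod_erase_add (k m : ℕ) (hk : 1 ≤ k) (hkm : k ≤ m) :
    2 * k ! * ∏ j ∈ (range (m + 1)).erase k, (k + j) = (m + k)! := by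
  obtain ⟨k, rfl⟩ : ∃ k', k = k' + 1 := ⟨k - 1, by omega⟩
  have hfull := factorial_mul_ascFactorial k (m + 1)
  rw [ascFactorial_eq_prod_range,
    ← mul_prod_erase _ _ (mem_range.2 (by omega : k + 1 < m + 1))] at hfull
  rw [show m + (k + 1) = k + (m + 1) by ring, ← hfull, factorial_succ]
  ring

lemma factorial_mul_factorial_le (k m : ℕ) (hkm : k ≤ m) : m ! * m ! ≤ (m - k)! * (m + k)! := by
  have hsub := choose_mul_factorial_mul_factorial (show m - k ≤ 2 * m by omega)
  have hmid := choose_mul_factorial_mul_factorial (show m ≤ 2 * m by omega)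
  rw [show 2 * m - (m - k) = m + k by omega] at hsub
  rw [show 2 * m - m = m by omega] at hmid
  refine Nat.le_of_mul_le_mul_left ?_ (choose_pos (show m - k ≤ 2 * m by omega))
  calc (2 * m).choose (m - k) * (m ! * m !) ≤ (2 * m).choose m * (m ! * m !) := by
        gcongr
        simpa [centralBinom_eq_two_mul_choose] using choose_le_centralBinom (m - k) m
    _ = (2 * m).choose (m - k) * ((m - k)! * (m + k)!) := by
        rw [← mul_assoc, hmid, ← mul_assoc, hsub]

lemma two_mul_prod_erase_abs_sq_sub_sq (k m : ℕ) (hk : 1 ≤ k) (hkm : k ≤ m) :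
    2 * ∏ j ∈ (range (m + 1)).erase k, |(k : ℝ) ^ 2 - (j : ℝ) ^ 2| = (m - k)! * (m + k)! := by
  have hfactor (j : ℕ) : |(k : ℝ) ^ 2 - (j : ℝ) ^ 2| = |(k : ℝ) - j| * ((k + j : ℕ) : ℝ) := by
    rw [← abs_of_nonneg (Nat.cast_nonneg (α := ℝ) (k + j)), ← abs_mul]
    push_cast
    ring_nf
  have hsum : (2 * k ! * ∏ j ∈ (range (m + 1)).erase k, (k + j) : ℕ) = ((m + k)! : ℝ) := by
    exact_mod_cast two_mul_factorial_mul_prod_erase_add k m hk hkm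
  simp_rw [hfactor, prod_mul_distrib, prod_erase_abs_natCast_sub k m hkm, ← hsum]
  push_cast
  ring

lemma sq_ne_two (j : ℕ) : j ^ 2 ≠ 2 := by
  rcases j with _ | _ | j
  · simp
  · simp
  · show (j + 2) ^ 2 ≠ 2
    have : 2 ^ 2 ≤ (j + 2) ^ 2 := Nat.pow_le_pow_left (by omega) 2
    omega

lemma sq_div_two_le_abs_sq_sub_two (k : ℕ) : (k : ℝ) ^ 2 / 2 ≤ |(k : ℝ) ^ 2 - 2| := by
  rcases k with _ | _ | k
  · simp
  · norm_num
  · have hk : (0 : ℝ) ≤ k := k.cast_nonneg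
    push_cast
    rw [abs_of_nonneg (by nlinarith)]
    nlinarith

lemma two_mul_prod_erase_sq_union_two (k m : ℕ) (hk : 1 ≤ k) (hkm : k ≤ m) :
    2 * ∏ i ∈ ((range (m + 1)).image (fun i => i ^ 2) ∪ {2}).erase (k ^ 2), |(k : ℝ) ^ 2 - i| =
      |(k : ℝ) ^ 2 - 2| * ((m - k)! * (m + k)!) := by
  have hinj : Function.Injective (fun i : ℕ => i ^ 2) := Nat.pow_left_injective two_ne_zero
  have hdisj : Disjoint (((range (m + 1)).erase k).image (fun i => i ^ 2)) {2} := by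
    simpa using fun j _ _ => sq_ne_two j
  rw [erase_union_distrib, ← image_erase hinj,
    erase_eq_of_notMem (s := {2}) (by simpa using sq_ne_two k),
    prod_union hdisj, prod_image hinj.injOn, prod_singleton,
    ← two_mul_prod_erase_abs_sq_sub_sq k m hk hkm]
  push_cast
  ring

theorem choose_sq_abs_P_sq_le (n : ℕ) (hn : 9 ≤ n) :
    let m := Nat.sqrt n
    let S : Finset ℕ := ((Finset.range (m + 1)).image (fun i => i ^ 2)) ∪ {2}
    let P : ℝ → ℝ := fun x =>
      2 * (-1 : ℝ) ^ (n - m - 1) * ((Nat.factorial m : ℝ) ^ 2 / Nat.factorial n) *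
        ∏ i ∈ Finset.range (n + 1) \ S, (x - i)
    ∀ k : ℕ, 1 ≤ k → k ≤ m →
      (n.choose (k ^ 2) : ℝ) * |P (k ^ 2)| ≤ 8 / (k ^ 2 : ℝ) := by
  intro m S P k hk hkm
  have hmn : m ^ 2 ≤ n := sqrt_le' n
  have hkn : k ^ 2 ≤ n := (Nat.pow_le_pow_left hkm 2).trans hmn
  have hSN : S ⊆ range (n + 1) := by
    simp only [S, union_subset_iff, image_subset_iff, mem_range, singleton_subset_iff]
    exact ⟨fun j hj => by linarith [Nat.pow_le_pow_left (Nat.lt_succ_iff.1 hj) 2], by omega⟩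
  have hkS : k ^ 2 ∈ S := mem_union_left _ (mem_image_of_mem _ (mem_range.2 (by omega)))
  have hsplit : (∏ i ∈ range (n + 1) \ S, |(k : ℝ) ^ 2 - i|) *
      (|(k : ℝ) ^ 2 - 2| * ((m - k)! * (m + k)!)) = 2 * ((k ^ 2)! * (n - k ^ 2)!) := by
    rw [← two_mul_prod_erase_sq_union_two k m hk hkm, ← Nat.cast_pow,
      ← prod_erase_abs_natCast_sub _ _ hkn, ← prod_sdiff_mul_prod_erase hSN hkS]
    ring
  have hP : |P (k ^ 2)| =
      2 * ((m ! : ℝ) ^ 2 / n !) * ∏ i ∈ range (n + 1) \ S, |(k : ℝ) ^ 2 - i| := by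
    simp only [P, abs_mul, abs_pow, abs_neg, abs_one, one_pow, mul_one, abs_prod, abs_two]
    rw [abs_of_nonneg (by positivity)]
  have hk0 : (0 : ℝ) < k := by exact_mod_cast hk
  have hk2 : 0 < |(k : ℝ) ^ 2 - 2| :=
    lt_of_lt_of_le (by positivity) (sq_div_two_le_abs_sq_sub_two k)
  have hfact : (m ! : ℝ) * m ! ≤ (m - k)! * (m + k)! := by
    exact_mod_cast factorial_mul_factorial_le k m hkm
  calc (n.choose (k ^ 2) : ℝ) * |P (k ^ 2)|
        = 4 * (m ! * m !) / ((m - k)! * (m + k)!) / |(k : ℝ) ^ 2 - 2| := by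
        rw [hP, Nat.cast_choose ℝ hkn]
        field_simp
        linear_combination 2 * hsplit
    _ ≤ 4 / |(k : ℝ) ^ 2 - 2| := by
        gcongr
        rw [div_le_iff₀ (by positivity)]
        linarith
    _ ≤ 8 / (k ^ 2 : ℝ) := by
        rw [div_le_div_iff₀ hk2 (by positivity)]
        linarith [sq_div_two_le_abs_sq_sub_two k]
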